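/- arXiv:2408.07000 — 3 statements merged into one kernel-verified Lean document; each statement's English description precedes it below -/
import Mathlib

section
/- Let k be a field of characteristic different from 2 and let (ω_r)_{r∈ℕ} be a sequence in k. Then the following are equivalent: (a) for all r ∈ ℕ, ω_{2r+1} = (1/2)·(−ω_{2r} + Σ_{n=0}^{2r} (−1)^n·ω_n·ω_{2r−n}); (b) O(v)·O⁻(v) = 1 in the formal power series ring k⟦v⟧, where W(v) := Σ_{r≥0} ω_r·v^r, W(−v) := Σ_{r≥0} (−1)^r·ω_r·v^r, O(v) := 1 + 2v·(2 − v)⁻¹·W(v), and O⁻(v) := 1 − 2v·(2 + v)⁻¹·W(−v). -/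
open PowerSeries Finset

/-- A sequence `(ω_r)` in a field of characteristic `≠ 2` is admissible (satisfies the
recursion expressing odd terms in terms of the previous ones) if and only if the
generating series `O(v) = 1 + 2v(2 − v)⁻¹ W(v)` and `O⁻(v) = 1 − 2v(2 + v)⁻¹ W(−v)`
satisfy `O(v)·O⁻(v) = 1` in `k⟦v⟧`. -/
theorem stmt_4 {k : Type*} [Field k] (h2 : (2 : k) ≠ 0) (ω : ℕ → k) :
    (∀ r : ℕ, ω (2 * r + 1) =
      1 / 2 * (-ω (2 * r) +
        ∑ n ∈ Finset.range (2 * r + 1), (-1 : k) ^ n * ω n * ω (2 * r - n))) ↔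
    (1 + 2 * PowerSeries.X * (2 - PowerSeries.X : PowerSeries k)⁻¹ * PowerSeries.mk ω) *
      (1 - 2 * PowerSeries.X * (2 + PowerSeries.X : PowerSeries k)⁻¹ *
        PowerSeries.mk fun r => (-1 : k) ^ r * ω r) = 1 := by
  set W : PowerSeries k := PowerSeries.mk ω with hW
  set W' : PowerSeries k := PowerSeries.mk (fun r => (-1 : k) ^ r * ω r) with hW'
  set X : PowerSeries k := PowerSeries.X with hX
  have hcA : constantCoeff (2 - X) = 2 := by simp [hX, map_ofNat]
  have hcB : constantCoeff (2 + X) = 2 := by simp [hX, map_ofNat]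
  have hA : (2 - X) * (2 - X)⁻¹ = 1 := PowerSeries.mul_inv_cancel _ (by rw [hcA]; exact h2)
  have hB : (2 + X) * (2 + X)⁻¹ = 1 := PowerSeries.mul_inv_cancel _ (by rw [hcB]; exact h2)
  have hAne : (2 - X : PowerSeries k) ≠ 0 := fun h => h2 (by rw [← hcA, h, map_zero])
  have hBne : (2 + X : PowerSeries k) ≠ 0 := fun h => h2 (by rw [← hcB, h, map_zero])
  have hu : ((2 : PowerSeries k) - X) * (2 + X) ≠ 0 := mul_ne_zero hAne hBne
  have h2ne : (2 : PowerSeries k) ≠ 0 := fun h => h2 (by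
    have := congrArg (constantCoeff) h; simpa [map_ofNat] using this)
  have h2X : (2 * X : PowerSeries k) ≠ 0 := mul_ne_zero h2ne (by rw [hX]; exact X_ne_zero)
  have hfactor : ((2 - X) + 2 * X * W) * ((2 + X) - 2 * X * W') =
      (2 - X) * (2 + X) * ((1 + 2 * X * (2 - X)⁻¹ * W) * (1 - 2 * X * (2 + X)⁻¹ * W')) := by
    have e1 : (2 - X) * (1 + 2 * X * (2 - X)⁻¹ * W) = (2 - X) + 2 * X * W := by
      have e : (2 - X) * (2 * X * (2 - X)⁻¹ * W) = ((2 - X) * (2 - X)⁻¹) * (2 * X * W) := by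
        ring
      rw [mul_add, mul_one, e, hA, one_mul]
    have e2 : (2 + X) * (1 - 2 * X * (2 + X)⁻¹ * W') = (2 + X) - 2 * X * W' := by
      have e : (2 + X) * (2 * X * (2 + X)⁻¹ * W') = ((2 + X) * (2 + X)⁻¹) * (2 * X * W') := by
        ring
      rw [mul_sub, mul_one, e, hB, one_mul]
    calc ((2 - X) + 2 * X * W) * ((2 + X) - 2 * X * W')
        = ((2 - X) * (1 + 2 * X * (2 - X)⁻¹ * W)) * ((2 + X) * (1 - 2 * X * (2 + X)⁻¹ * W')) := by
          rw [e1, e2]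
      _ = _ := by ring
  have main : ((1 + 2 * X * (2 - X)⁻¹ * W) * (1 - 2 * X * (2 + X)⁻¹ * W') = 1) ↔
      ((2 + X) * W - (2 - X) * W' = 2 * (X * (W * W'))) := by
    constructor
    · intro h
      have h' : ((2 - X) + 2 * X * W) * ((2 + X) - 2 * X * W') = (2 - X) * (2 + X) := by
        rw [hfactor, h, mul_one]
      have h'' : 2 * X * ((2 + X) * W - (2 - X) * W' - 2 * (X * (W * W'))) = 0 := by
        linear_combination h'
      rcases mul_eq_zero.1 h'' with h3 | h3
      · exact absurd h3 h2X
      · exact sub_eq_zero.mp h3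
    · intro h
      have h' : ((2 - X) + 2 * X * W) * ((2 + X) - 2 * X * W') = (2 - X) * (2 + X) := by
        linear_combination (2 * X) * h
      exact mul_left_cancel₀ hu (by rw [← hfactor, h', mul_one])
  rw [main, PowerSeries.ext_iff]
  -- coefficient computations
  have hneg : ∀ m i : ℕ, i ≤ m → ((-1 : k) ^ (m - i)) = (-1) ^ m * (-1) ^ i := by
    intro m i h
    have h1 : (-1 : k) ^ (m - i) * (-1) ^ i = (-1) ^ m := by
      rw [← pow_add, Nat.sub_add_cancel h]
    have h2' : ((-1 : k) ^ i) * ((-1) ^ i) = 1 := by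
      rw [← pow_add]; exact Even.neg_one_pow ⟨i, rfl⟩
    calc (-1 : k) ^ (m - i) = (-1) ^ (m - i) * ((-1) ^ i * (-1) ^ i) := by rw [h2', mul_one]
      _ = ((-1) ^ (m - i) * (-1) ^ i) * (-1) ^ i := by ring
      _ = (-1) ^ m * (-1) ^ i := by rw [h1]
  have hL : ∀ m : ℕ, (PowerSeries.coeff (m + 1)) ((2 + X) * W - (2 - X) * W') =
      (2 * ω (m + 1) + ω m) - (2 * ((-1) ^ (m + 1) * ω (m + 1)) - (-1) ^ m * ω m) := by
    intro m
    have e : ((2 : PowerSeries k) + X) * W - (2 - X) * W' =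
        (C (2 : k) * W + X * W) - (C (2 : k) * W' - X * W') := by
      rw [map_ofNat (C (R := k)) 2]; ring
    rw [e]
    simp [hW, hW', hX, coeff_succ_X_mul, coeff_mk]
  have hR : ∀ m : ℕ, (PowerSeries.coeff (m + 1)) (2 * (X * (W * W'))) =
      2 * ∑ i ∈ range (m + 1), ω i * ((-1 : k) ^ (m - i) * ω (m - i)) := by
    intro m
    rw [show (2 : PowerSeries k) = C (2 : k) from (map_ofNat _ 2).symm, coeff_C_mul,
      coeff_succ_X_mul, coeff_mul, Finset.Nat.sum_antidiagonal_eq_sum_range_succ_mk]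
    simp [hW, hW', coeff_mk]
  have h0 : (PowerSeries.coeff 0) ((2 + X) * W - (2 - X) * W') =
      (PowerSeries.coeff 0) (2 * (X * (W * W'))) := by
    simp [coeff_zero_eq_constantCoeff, hW, hW', hX]
  have hsum : ∀ r : ℕ, ∑ i ∈ range (2 * r + 1), ω i * ((-1 : k) ^ (2 * r - i) * ω (2 * r - i)) =
      ∑ n ∈ range (2 * r + 1), (-1 : k) ^ n * ω n * ω (2 * r - n) := by
    intro r
    refine Finset.sum_congr rfl fun i hi => ?_
    have hi' : i ≤ 2 * r := Nat.lt_succ_iff.mp (Finset.mem_range.mp hi)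
    rw [hneg _ _ hi', Even.neg_one_pow (even_two_mul r)]
    ring
  have hzero : ∀ s : ℕ,
      ∑ i ∈ range (2 * s + 1 + 1), ω i * ((-1 : k) ^ (2 * s + 1 - i) * ω (2 * s + 1 - i)) = 0 := by
    intro s
    set m := 2 * s + 1 with hm
    set S := ∑ i ∈ range (m + 1), ω i * ((-1 : k) ^ (m - i) * ω (m - i)) with hS
    have hrefl : S = ∑ i ∈ range (m + 1), (-1 : k) ^ i * ω i * ω (m - i) := by
      rw [hS, ← Finset.sum_range_reflect]
      refine Finset.sum_congr rfl fun i hi => ?_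
      have hi' : i ≤ m := Nat.lt_succ_iff.mp (Finset.mem_range.mp hi)
      have e1 : m + 1 - 1 - i = m - i := by omega
      have e2 : m - (m - i) = i := Nat.sub_sub_self hi'
      rw [e1, e2]; ring
    have hsign : S = -∑ i ∈ range (m + 1), (-1 : k) ^ i * ω i * ω (m - i) := by
      rw [hS]
      rw [← Finset.sum_neg_distrib]
      refine Finset.sum_congr rfl fun i hi => ?_
      have hi' : i ≤ m := Nat.lt_succ_iff.mp (Finset.mem_range.mp hi)
      rw [hneg _ _ hi', hm, Odd.neg_one_pow ⟨s, rfl⟩]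
      ring
    have h2S : (2 : k) * S = 0 := by linear_combination hrefl + hsign
    exact (mul_eq_zero.mp h2S).resolve_left h2
  constructor
  · intro ha n
    match n with
    | 0 => exact h0
    | Nat.succ m =>
      rw [hL, hR]
      rcases Nat.even_or_odd m with ⟨s, hs⟩ | ⟨s, hs⟩
      · have hm : m = 2 * s := by omega
        subst hm
        rw [hsum s, Odd.neg_one_pow (n := 2 * s + 1) ⟨s, rfl⟩,
          Even.neg_one_pow (n := 2 * s) (even_two_mul s)]
        have h3 : 2 * ω (2 * s + 1) =
            -ω (2 * s) + ∑ n ∈ range (2 * s + 1), (-1 : k) ^ n * ω n * ω (2 * s - n) := by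
          rw [ha s, one_div, mul_inv_cancel_left₀ h2]
        linear_combination 2 * h3
      · have hm : m = 2 * s + 1 := by omega
        subst hm
        rw [hzero s, Odd.neg_one_pow (n := 2 * s + 1) ⟨s, rfl⟩,
          Even.neg_one_pow (n := 2 * s + 1 + 1) ⟨s + 1, by ring⟩]
        ring
  · intro h r
    have hh := h (2 * r + 1)
    rw [hL (2 * r), hR (2 * r), hsum r, Odd.neg_one_pow (n := 2 * r + 1) ⟨r, rfl⟩,
      Even.neg_one_pow (n := 2 * r) (even_two_mul r)] at hh
    have h3 : 2 * ω (2 * r + 1) =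
        -ω (2 * r) + ∑ n ∈ range (2 * r + 1), (-1 : k) ^ n * ω n * ω (2 * r - n) := by
      apply mul_left_cancel₀ h2
      linear_combination hh
    rw [← h3, one_div, inv_mul_cancel_left₀ h2]
end

section
/- Given a Brauer datum (X, c, e, τ, δ) in a k-linear monoidal category C, the following relations hold: (i) τ ∘ c = c; (ii) (τ ⊗ id_X) ∘ (id_X ⊗ c) = (id_X ⊗ τ) ∘ (c ⊗ id_X); (iii) τ ∘ (δ ⊗ id_X) − (id_X ⊗ δ) ∘ τ = id_{X⊗X} − c ∘ e; (iv) (δ ⊗ id_X) ∘ c = −(id_X ⊗ δ) ∘ c. -/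
open CategoryTheory CategoryTheory.MonoidalCategory

universe v u

/-- A Brauer datum in a `k`-linear monoidal category: an object `X` together with
cup, cap, crossing and dot morphisms satisfying the defining relations of the
affine Brauer category (with unitors and associators written explicitly). -/
structure BrauerDatum (k : Type*) [CommRing k] [Invertible (2 : k)]
    (C : Type u) [Category.{v} C] [MonoidalCategory C]
    [Preadditive C] [Linear k C] [MonoidalPreadditive C] [MonoidalLinear k C] where
  X : C
  cup : 𝟙_ C ⟶ X ⊗ X
  cap : X ⊗ X ⟶ 𝟙_ C
  cross : X ⊗ X ⟶ X ⊗ X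
  dot : X ⟶ X
  cross_cross : cross ≫ cross = 𝟙 (X ⊗ X)
  braid : (cross ▷ X) ≫ (α_ X X X).hom ≫ (X ◁ cross) ≫ (α_ X X X).inv ≫ (cross ▷ X) =
    (α_ X X X).hom ≫ (X ◁ cross) ≫ (α_ X X X).inv ≫ (cross ▷ X) ≫
      (α_ X X X).hom ≫ (X ◁ cross) ≫ (α_ X X X).inv
  zig : (ρ_ X).inv ≫ (X ◁ cup) ≫ (α_ X X X).inv ≫ (cap ▷ X) ≫ (λ_ X).hom = 𝟙 X
  zag : (λ_ X).inv ≫ (cup ▷ X) ≫ (α_ X X X).hom ≫ (X ◁ cap) ≫ (ρ_ X).hom = 𝟙 X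
  cross_cap : cross ≫ cap = cap
  cap_slide : (cross ▷ X) ≫ (α_ X X X).hom ≫ (X ◁ cap) ≫ (ρ_ X).hom =
    (α_ X X X).hom ≫ (X ◁ cross) ≫ (α_ X X X).inv ≫ (cap ▷ X) ≫ (λ_ X).hom
  dot_cross : cross ≫ (dot ▷ X) - (X ◁ dot) ≫ cross = 𝟙 (X ⊗ X) - cap ≫ cup
  dot_cap : (dot ▷ X) ≫ cap = -((X ◁ dot) ≫ cap)

namespace BrauerDatum

variable {k : Type*} [CommRing k] [Invertible (2 : k)]
  {C : Type u} [Category.{v} C] [MonoidalCategory C]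
  [Preadditive C] [Linear k C] [MonoidalPreadditive C] [MonoidalLinear k C]

variable (D : BrauerDatum k C)

/-- The `n`-fold composite of the dot. -/
def dpow : ℕ → (D.X ⟶ D.X)
  | 0 => 𝟙 D.X
  | n + 1 => dpow n ≫ D.dot

/-- The `n`-dotted bubble `ω_n = e ∘ (id_X ⊗ δ^n) ∘ c` in `End(𝟙)`. -/
def bub (n : ℕ) : 𝟙_ C ⟶ 𝟙_ C := D.cup ≫ (D.X ◁ D.dpow n) ≫ D.cap

end BrauerDatum


namespace BrauerDatum

variable {k : Type*} [CommRing k] [Invertible (2 : k)]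
  {C : Type u} [Category.{v} C] [MonoidalCategory C]
  [Preadditive C] [Linear k C] [MonoidalPreadditive C] [MonoidalLinear k C]

variable (D : BrauerDatum k C)

lemma snake_zig : (D.X ◁ D.cup) ≫ (α_ D.X D.X D.X).inv ≫ (D.cap ▷ D.X) =
    (ρ_ D.X).hom ≫ (λ_ D.X).inv := by
  rw [← cancel_epi (ρ_ D.X).inv, ← cancel_mono (λ_ D.X).hom]
  simpa using D.zig

lemma snake_zag : (D.cup ▷ D.X) ≫ (α_ D.X D.X D.X).hom ≫ (D.X ◁ D.cap) =
    (λ_ D.X).hom ≫ (ρ_ D.X).inv := by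
  rw [← cancel_epi (λ_ D.X).inv, ← cancel_mono (ρ_ D.X).hom]
  simpa using D.zag

def pairing : ExactPairing D.X D.X where
  coevaluation' := D.cup
  evaluation' := D.cap
  coevaluation_evaluation' := D.snake_zig
  evaluation_coevaluation' := D.snake_zag

lemma whiskerLeft_neg' (P : C) {Q R : C} (f : Q ⟶ R) : P ◁ (-f) = -(P ◁ f) := by
  apply eq_neg_of_add_eq_zero_left
  rw [← MonoidalPreadditive.whiskerLeft_add]
  simp

lemma neg_whiskerRight' {Q R : C} (f : Q ⟶ R) (P : C) : (-f) ▷ P = -(f ▷ P) := by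
  apply eq_neg_of_add_eq_zero_left
  rw [← MonoidalPreadditive.add_whiskerRight]
  simp


attribute [local instance] BrauerDatum.pairing

lemma key_ii :
    (tensorRightHomEquiv D.X D.X D.X (D.X ⊗ D.X)).symm
      ((λ_ D.X).inv ≫ (D.cup ▷ D.X) ≫ (α_ D.X D.X D.X).hom ≫ (D.X ◁ D.cross) ≫
        (α_ D.X D.X D.X).inv) = D.cross := by
  have hε : ε_ D.X D.X = D.cap := rfl
  simp only [tensorRightHomEquiv, Equiv.coe_fn_symm_mk, hε]
  calc ((λ_ D.X).inv ≫ (D.cup ▷ D.X) ≫ (α_ D.X D.X D.X).hom ≫ (D.X ◁ D.cross) ≫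
        (α_ D.X D.X D.X).inv) ▷ D.X ≫ (α_ (D.X ⊗ D.X) D.X D.X).hom ≫
        (D.X ⊗ D.X) ◁ D.cap ≫ (ρ_ (D.X ⊗ D.X)).hom
      = 𝟙 _ ⊗≫ (D.cup ▷ (D.X ⊗ D.X)) ⊗≫
          (D.X ◁ ((D.cross ▷ D.X) ≫ (α_ D.X D.X D.X).hom ≫ (D.X ◁ D.cap) ≫
            (ρ_ D.X).hom)) ⊗≫ 𝟙 _ := by
        monoidal
    _ = 𝟙 _ ⊗≫ (D.cup ▷ (D.X ⊗ D.X)) ⊗≫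
          (D.X ◁ ((α_ D.X D.X D.X).hom ≫ (D.X ◁ D.cross) ≫ (α_ D.X D.X D.X).inv ≫
            (D.cap ▷ D.X) ≫ (λ_ D.X).hom)) ⊗≫ 𝟙 _ := by
        rw [D.cap_slide]
    _ = 𝟙 _ ⊗≫ ((D.cup ▷ (D.X ⊗ D.X)) ≫ ((D.X ⊗ D.X) ◁ D.cross)) ⊗≫
          (D.X ◁ (D.cap ▷ D.X)) ⊗≫ 𝟙 _ := by
        monoidal
    _ = 𝟙 _ ⊗≫ ((𝟙_ C ◁ D.cross) ≫ (D.cup ▷ (D.X ⊗ D.X))) ⊗≫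
          (D.X ◁ (D.cap ▷ D.X)) ⊗≫ 𝟙 _ := by
        rw [← whisker_exchange]
    _ = D.cross ⊗≫ (((D.cup ▷ D.X) ≫ (α_ D.X D.X D.X).hom ≫ (D.X ◁ D.cap)) ▷ D.X) ⊗≫ 𝟙 _ := by
        monoidal
    _ = D.cross ⊗≫ (((λ_ D.X).hom ≫ (ρ_ D.X).inv) ▷ D.X) ⊗≫ 𝟙 _ := by
        rw [D.snake_zag]
    _ = D.cross := by
        monoidal


lemma relation_ii :
    (ρ_ D.X).inv ≫ (D.X ◁ D.cup) ≫ (α_ D.X D.X D.X).inv ≫ (D.cross ▷ D.X) =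
      (λ_ D.X).inv ≫ (D.cup ▷ D.X) ≫ (α_ D.X D.X D.X).hom ≫ (D.X ◁ D.cross) ≫
        (α_ D.X D.X D.X).inv := by
  have lhs_eq : (tensorRightHomEquiv D.X D.X D.X (D.X ⊗ D.X)) D.cross =
      (ρ_ D.X).inv ≫ (D.X ◁ D.cup) ≫ (α_ D.X D.X D.X).inv ≫ (D.cross ▷ D.X) := rfl
  have key2 := congrArg (tensorRightHomEquiv D.X D.X D.X (D.X ⊗ D.X)) D.key_ii
  rw [Equiv.apply_symm_apply] at key2
  rw [key2, ← lhs_eq]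

lemma cap_slide₂ :
    (D.X ◁ D.cross) ≫ (α_ D.X D.X D.X).inv ≫ (D.cap ▷ D.X) ≫ (λ_ D.X).hom =
      (α_ D.X D.X D.X).inv ≫ (D.cross ▷ D.X) ≫ (α_ D.X D.X D.X).hom ≫
        (D.X ◁ D.cap) ≫ (ρ_ D.X).hom := by
  rw [← cancel_epi (α_ D.X D.X D.X).hom, ← D.cap_slide]
  simp

lemma relation_i : D.cup ≫ D.cross = D.cup := by
  apply (tensorLeftHomEquiv (𝟙_ C) D.X D.X D.X).symm.injective
  have hε : ε_ D.X D.X = D.cap := rfl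
  simp only [tensorLeftHomEquiv, Equiv.coe_fn_symm_mk, hε]
  trans (ρ_ D.X).hom
  · calc D.X ◁ (D.cup ≫ D.cross) ≫ (α_ D.X D.X D.X).inv ≫ D.cap ▷ D.X ≫ (λ_ D.X).hom
        = 𝟙 _ ⊗≫ (D.X ◁ D.cup) ⊗≫ ((D.X ◁ D.cross) ≫ (α_ D.X D.X D.X).inv ≫
            (D.cap ▷ D.X) ≫ (λ_ D.X).hom) := by monoidal
      _ = 𝟙 _ ⊗≫ (D.X ◁ D.cup) ⊗≫ ((α_ D.X D.X D.X).inv ≫ (D.cross ▷ D.X) ≫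
            (α_ D.X D.X D.X).hom ≫ (D.X ◁ D.cap) ≫ (ρ_ D.X).hom) := by rw [D.cap_slide₂]
      _ = 𝟙 _ ⊗≫ ((ρ_ D.X).inv ≫ (D.X ◁ D.cup) ≫ (α_ D.X D.X D.X).inv ≫
            (D.cross ▷ D.X)) ⊗≫ (D.X ◁ D.cap) ⊗≫ 𝟙 _ := by monoidal
      _ = 𝟙 _ ⊗≫ ((λ_ D.X).inv ≫ (D.cup ▷ D.X) ≫ (α_ D.X D.X D.X).hom ≫ (D.X ◁ D.cross) ≫
            (α_ D.X D.X D.X).inv) ⊗≫ (D.X ◁ D.cap) ⊗≫ 𝟙 _ := by rw [D.relation_ii]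
      _ = 𝟙 _ ⊗≫ (D.cup ▷ D.X) ⊗≫ (D.X ◁ (D.cross ≫ D.cap)) ⊗≫ 𝟙 _ := by monoidal
      _ = 𝟙 _ ⊗≫ ((D.cup ▷ D.X) ≫ (α_ D.X D.X D.X).hom ≫ (D.X ◁ D.cap)) ⊗≫ 𝟙 _ := by
          rw [D.cross_cap]; monoidal
      _ = 𝟙 _ ⊗≫ ((λ_ D.X).hom ≫ (ρ_ D.X).inv) ⊗≫ 𝟙 _ := by rw [D.snake_zag]
      _ = (ρ_ D.X).hom := by monoidal
  · symm
    rw [reassoc_of% D.snake_zig]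
    simp


lemma relation_iv : D.cup ≫ (D.dot ▷ D.X) = -(D.cup ≫ (D.X ◁ D.dot)) := by
  apply (tensorRightHomEquiv (𝟙_ C) D.X D.X D.X).symm.injective
  have hε : ε_ D.X D.X = D.cap := rfl
  simp only [tensorRightHomEquiv, Equiv.coe_fn_symm_mk, hε, neg_whiskerRight',
    Preadditive.neg_comp]
  trans (λ_ D.X).hom ≫ D.dot
  · calc (D.cup ≫ D.dot ▷ D.X) ▷ D.X ≫ (α_ D.X D.X D.X).hom ≫ D.X ◁ D.cap ≫ (ρ_ D.X).hom
        = 𝟙 _ ⊗≫ (D.cup ▷ D.X) ⊗≫ ((D.dot ▷ (D.X ⊗ D.X)) ≫ (D.X ◁ D.cap)) ⊗≫ 𝟙 _ := by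
          monoidal
      _ = 𝟙 _ ⊗≫ (D.cup ▷ D.X) ⊗≫ ((D.X ◁ D.cap) ≫ (D.dot ▷ 𝟙_ C)) ⊗≫ 𝟙 _ := by
          rw [← whisker_exchange]
      _ = (𝟙 _ ⊗≫ ((D.cup ▷ D.X) ≫ (α_ D.X D.X D.X).hom ≫ (D.X ◁ D.cap)) ⊗≫ 𝟙 _) ≫
            D.dot := by monoidal
      _ = (𝟙 _ ⊗≫ ((λ_ D.X).hom ≫ (ρ_ D.X).inv) ⊗≫ 𝟙 _) ≫ D.dot := by rw [D.snake_zag]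
      _ = (λ_ D.X).hom ≫ D.dot := by monoidal
  · symm
    calc -((D.cup ≫ D.X ◁ D.dot) ▷ D.X ≫ (α_ D.X D.X D.X).hom ≫ D.X ◁ D.cap ≫ (ρ_ D.X).hom)
        = -(𝟙 _ ⊗≫ (D.cup ▷ D.X) ⊗≫ (D.X ◁ ((D.dot ▷ D.X) ≫ D.cap)) ⊗≫ 𝟙 _) := by
          rw [neg_inj]; monoidal
      _ = 𝟙 _ ⊗≫ (D.cup ▷ D.X) ⊗≫ (D.X ◁ ((D.X ◁ D.dot) ≫ D.cap)) ⊗≫ 𝟙 _ := by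
          rw [D.dot_cap, whiskerLeft_neg']
          simp only [monoidalComp, Preadditive.neg_comp, Preadditive.comp_neg, neg_neg]
      _ = 𝟙 _ ⊗≫ ((D.cup ▷ D.X) ≫ ((D.X ⊗ D.X) ◁ D.dot)) ⊗≫ (D.X ◁ D.cap) ⊗≫ 𝟙 _ := by
          monoidal
      _ = 𝟙 _ ⊗≫ ((𝟙_ C ◁ D.dot) ≫ (D.cup ▷ D.X)) ⊗≫ (D.X ◁ D.cap) ⊗≫ 𝟙 _ := by
          rw [← whisker_exchange]
      _ = (𝟙_ C ◁ D.dot) ≫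
            (𝟙 _ ⊗≫ ((D.cup ▷ D.X) ≫ (α_ D.X D.X D.X).hom ≫ (D.X ◁ D.cap)) ⊗≫ 𝟙 _) := by
          monoidal
      _ = (λ_ D.X).hom ≫ D.dot := by rw [D.snake_zag]; monoidal

end BrauerDatum

/-- Relations (i)–(iv): `τ ∘ c = c`; `(τ ⊗ id) ∘ (id ⊗ c) = (id ⊗ τ) ∘ (c ⊗ id)`;
`τ ∘ (δ ⊗ id) − (id ⊗ δ) ∘ τ = id − c ∘ e`; `(δ ⊗ id) ∘ c = −(id ⊗ δ) ∘ c`. -/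
theorem stmt_5 {k : Type*} [CommRing k] [Invertible (2 : k)]
    {C : Type u} [Category.{v} C] [MonoidalCategory C]
    [Preadditive C] [Linear k C] [MonoidalPreadditive C] [MonoidalLinear k C]
    (D : BrauerDatum k C) :
    (D.cup ≫ D.cross = D.cup) ∧
    ((ρ_ D.X).inv ≫ (D.X ◁ D.cup) ≫ (α_ D.X D.X D.X).inv ≫ (D.cross ▷ D.X) =
      (λ_ D.X).inv ≫ (D.cup ▷ D.X) ≫ (α_ D.X D.X D.X).hom ≫ (D.X ◁ D.cross) ≫
        (α_ D.X D.X D.X).inv) ∧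
    ((D.dot ▷ D.X) ≫ D.cross - D.cross ≫ (D.X ◁ D.dot) = 𝟙 (D.X ⊗ D.X) - D.cap ≫ D.cup) ∧
    (D.cup ≫ (D.dot ▷ D.X) = -(D.cup ≫ (D.X ◁ D.dot))) := by
  refine ⟨D.relation_i, D.relation_ii, ?_, D.relation_iv⟩
  have h := congrArg (fun f => D.cross ≫ f ≫ D.cross) D.dot_cross
  simp only [Preadditive.comp_sub, Preadditive.sub_comp, Category.assoc, Category.comp_id,
    Category.id_comp] at h
  rw [reassoc_of% D.cross_cross, reassoc_of% D.cross_cap, D.cross_cross, D.relation_i] at h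
  simpa using h
end

section
/- Given a Kauffman datum (X, c, e, σ, σ̄, δ, δ̄) in a k-linear monoidal category C, the following relations hold: (i) e ∘ σ = t⁻¹·e; (ii) σ̄ ∘ c = t·c; (iii) σ ∘ c = t⁻¹·c; (iv) (δ ⊗ id_X) ∘ c = (id_X ⊗ δ̄) ∘ c. -/
open CategoryTheory CategoryTheory.MonoidalCategory

universe v u

/-- A Kauffman datum in a `k`-linear monoidal category: an object `X` together with
cup, cap, mutually inverse positive/negative crossings and mutually inverse dot and
inverse dot, satisfying the defining relations of the affine Kauffman category
`AK(z,t)` (with unitors and associators written explicitly). -/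
structure KauffmanDatum (k : Type*) [CommRing k] (z t : k) [Invertible z] [Invertible t]
    (C : Type u) [Category.{v} C] [MonoidalCategory C]
    [Preadditive C] [Linear k C] [MonoidalPreadditive C] [MonoidalLinear k C] where
  X : C
  cup : 𝟙_ C ⟶ X ⊗ X
  cap : X ⊗ X ⟶ 𝟙_ C
  pos : X ⊗ X ⟶ X ⊗ X
  neg : X ⊗ X ⟶ X ⊗ X
  dot : X ⟶ X
  dotInv : X ⟶ X
  pos_neg : pos ≫ neg = 𝟙 (X ⊗ X)
  neg_pos : neg ≫ pos = 𝟙 (X ⊗ X)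
  dot_dotInv : dot ≫ dotInv = 𝟙 X
  dotInv_dot : dotInv ≫ dot = 𝟙 X
  braid : (pos ▷ X) ≫ (α_ X X X).hom ≫ (X ◁ pos) ≫ (α_ X X X).inv ≫ (pos ▷ X) =
    (α_ X X X).hom ≫ (X ◁ pos) ≫ (α_ X X X).inv ≫ (pos ▷ X) ≫
      (α_ X X X).hom ≫ (X ◁ pos) ≫ (α_ X X X).inv
  zig : (ρ_ X).inv ≫ (X ◁ cup) ≫ (α_ X X X).inv ≫ (cap ▷ X) ≫ (λ_ X).hom = 𝟙 X
  zag : (λ_ X).inv ≫ (cup ▷ X) ≫ (α_ X X X).hom ≫ (X ◁ cap) ≫ (ρ_ X).hom = 𝟙 X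
  neg_cap : neg ≫ cap = t • cap
  cap_slide : (neg ▷ X) ≫ (α_ X X X).hom ≫ (X ◁ cap) ≫ (ρ_ X).hom =
    (α_ X X X).hom ≫ (X ◁ pos) ≫ (α_ X X X).inv ≫ (cap ▷ X) ≫ (λ_ X).hom
  skein : pos - neg = z • (𝟙 (X ⊗ X) - cap ≫ cup)
  bubble : cup ≫ cap = (⅟z * (t - ⅟t) + 1) • 𝟙 (𝟙_ C)
  dot_slide : (dot ▷ X) ≫ neg = pos ≫ (X ◁ dot)
  dot_cap : (dot ▷ X) ≫ cap = (X ◁ dotInv) ≫ cap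

namespace KauffmanDatum

variable {k : Type*} [CommRing k] {z t : k} [Invertible z] [Invertible t]
  {C : Type u} [Category.{v} C] [MonoidalCategory C]
  [Preadditive C] [Linear k C] [MonoidalPreadditive C] [MonoidalLinear k C]

variable (D : KauffmanDatum k z t C)

/-- The `n`-fold composite of the dot. -/
def dpow : ℕ → (D.X ⟶ D.X)
  | 0 => 𝟙 D.X
  | n + 1 => dpow n ≫ D.dot

/-- The `n`-fold composite of the inverse dot. -/
def dpowInv : ℕ → (D.X ⟶ D.X)
  | 0 => 𝟙 D.X
  | n + 1 => dpowInv n ≫ D.dotInv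

/-- The `n`-th power of the (invertible) dot, for `n ∈ ℤ`. -/
def zdpow : ℤ → (D.X ⟶ D.X)
  | Int.ofNat n => D.dpow n
  | Int.negSucc n => D.dpowInv (n + 1)

/-- The `n`-dotted bubble `β_n = e ∘ (id_X ⊗ δ^n) ∘ c ∈ End(𝟙)`, for `n ∈ ℤ`. -/
def zbub (n : ℤ) : 𝟙_ C ⟶ 𝟙_ C := D.cup ≫ (D.X ◁ D.zdpow n) ≫ D.cap

end KauffmanDatum


namespace KauffmanDatum

variable {k : Type*} [CommRing k] {z t : k} [Invertible z] [Invertible t]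
  {C : Type u} [Category.{v} C] [MonoidalCategory C]
  [Preadditive C] [Linear k C] [MonoidalPreadditive C] [MonoidalLinear k C]
  (D : KauffmanDatum k z t C)

lemma zig' :
    (D.X ◁ D.cup) ≫ (α_ D.X D.X D.X).inv ≫ (D.cap ▷ D.X) ≫ (λ_ D.X).hom = (ρ_ D.X).hom := by
  have h := D.zig
  rw [Iso.inv_comp_eq] at h
  simpa using h

lemma zag' :
    (D.cup ▷ D.X) ≫ (α_ D.X D.X D.X).hom ≫ (D.X ◁ D.cap) ≫ (ρ_ D.X).hom = (λ_ D.X).hom := by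
  have h := D.zag
  rw [Iso.inv_comp_eq] at h
  simpa using h

/-- The cup and cap form an exact pairing of `X` with itself. -/
def ep : ExactPairing D.X D.X where
  coevaluation' := D.cup
  evaluation' := D.cap
  coevaluation_evaluation' := by
    rw [← cancel_mono (λ_ D.X).hom]
    simpa [Category.assoc] using D.zig'
  evaluation_coevaluation' := by
    rw [← cancel_mono (ρ_ D.X).hom]
    simpa [Category.assoc] using D.zag'

lemma snake_comp :
    D.cup ▷ D.X ≫ (α_ D.X D.X D.X).hom ≫ D.X ◁ D.cap = (λ_ D.X).hom ≫ (ρ_ D.X).inv := by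
  rw [Iso.eq_comp_inv]
  simpa [Category.assoc] using D.zag'


lemma pos_cap : D.pos ≫ D.cap = ⅟t • D.cap := by
  have h := congrArg (fun f => f ≫ D.cap) D.skein
  simp only [Preadditive.sub_comp, Linear.smul_comp, Category.id_comp, Category.assoc,
    D.bubble, Linear.comp_smul, Category.comp_id, D.neg_cap] at h
  have hsc : z • (D.cap - (⅟z * (t - ⅟t) + 1) • D.cap) = (z - (t - ⅟t + z)) • D.cap := by
    rw [smul_sub, smul_smul, ← sub_smul]
    congr 1
    linear_combination (⅟t - t) * (mul_invOf_self z)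
  rw [hsc] at h
  have h2 := sub_eq_iff_eq_add.mp h
  rw [h2, ← add_smul]
  congr 1
  ring

include k in
lemma sub_whiskerRight {A B : C} (f g : A ⟶ B) (Y : C) : (f - g) ▷ Y = f ▷ Y - g ▷ Y := by
  have h : -g = (-1 : k) • g := by simp
  rw [sub_eq_add_neg, sub_eq_add_neg, h, MonoidalPreadditive.add_whiskerRight,
    MonoidalLinear.smul_whiskerRight]
  simp

include k in
lemma whiskerLeft_sub (Y : C) {A B : C} (f g : A ⟶ B) : Y ◁ (f - g) = Y ◁ f - Y ◁ g := by
  have h : -g = (-1 : k) • g := by simp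
  rw [sub_eq_add_neg, sub_eq_add_neg, h, MonoidalPreadditive.whiskerLeft_add,
    MonoidalLinear.whiskerLeft_smul]
  simp

/-- The mirror slide: the positive crossing slides over a cap into a negative crossing. -/
lemma pos_slide :
    (D.pos ▷ D.X) ≫ (α_ D.X D.X D.X).hom ≫ (D.X ◁ D.cap) ≫ (ρ_ D.X).hom =
      (α_ D.X D.X D.X).hom ≫ (D.X ◁ D.neg) ≫ (α_ D.X D.X D.X).inv ≫ (D.cap ▷ D.X) ≫
        (λ_ D.X).hom := by
  have hp : D.pos = D.neg + z • (𝟙 (D.X ⊗ D.X) - D.cap ≫ D.cup) := by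
    rw [← D.skein]; abel
  have hn : D.neg = D.pos - z • (𝟙 (D.X ⊗ D.X) - D.cap ≫ D.cup) := by
    rw [← D.skein]; abel
  have hB : (D.cap ▷ D.X) ≫ (D.cup ▷ D.X) ≫ (α_ D.X D.X D.X).hom ≫ (D.X ◁ D.cap) ≫
      (ρ_ D.X).hom = (D.cap ▷ D.X) ≫ (λ_ D.X).hom := by
    rw [D.zag']
  have hD : (α_ D.X D.X D.X).hom ≫ (D.X ◁ D.cap) ≫ (D.X ◁ D.cup) ≫ (α_ D.X D.X D.X).inv ≫
      (D.cap ▷ D.X) ≫ (λ_ D.X).hom = (α_ D.X D.X D.X).hom ≫ (D.X ◁ D.cap) ≫ (ρ_ D.X).hom := by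
    rw [D.zig']
  calc (D.pos ▷ D.X) ≫ (α_ D.X D.X D.X).hom ≫ (D.X ◁ D.cap) ≫ (ρ_ D.X).hom
      = ((D.neg ▷ D.X) ≫ (α_ D.X D.X D.X).hom ≫ (D.X ◁ D.cap) ≫ (ρ_ D.X).hom)
        + z • ((α_ D.X D.X D.X).hom ≫ (D.X ◁ D.cap) ≫ (ρ_ D.X).hom)
        - z • ((D.cap ▷ D.X) ≫ (λ_ D.X).hom) := by
        rw [hp]
        rw [MonoidalPreadditive.add_whiskerRight, MonoidalLinear.smul_whiskerRight,
          sub_whiskerRight (k := k) _ _ _]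
        simp only [Preadditive.add_comp, Linear.smul_comp, Preadditive.sub_comp,
          MonoidalCategory.id_whiskerRight, Category.id_comp, MonoidalCategory.comp_whiskerRight,
          Category.assoc, smul_sub]
        rw [← hB]
        abel
    _ = ((α_ D.X D.X D.X).hom ≫ (D.X ◁ D.pos) ≫ (α_ D.X D.X D.X).inv ≫ (D.cap ▷ D.X) ≫
          (λ_ D.X).hom)
        + z • ((α_ D.X D.X D.X).hom ≫ (D.X ◁ D.cap) ≫ (ρ_ D.X).hom)
        - z • ((D.cap ▷ D.X) ≫ (λ_ D.X).hom) := by rw [D.cap_slide]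
    _ = (α_ D.X D.X D.X).hom ≫ (D.X ◁ D.neg) ≫ (α_ D.X D.X D.X).inv ≫ (D.cap ▷ D.X) ≫
          (λ_ D.X).hom := by
        rw [hn]
        rw [whiskerLeft_sub (k := k), MonoidalLinear.whiskerLeft_smul, whiskerLeft_sub (k := k)]
        simp only [Preadditive.sub_comp, Preadditive.comp_sub, Linear.smul_comp,
          Linear.comp_smul, MonoidalCategory.whiskerLeft_id, Category.id_comp,
          MonoidalCategory.whiskerLeft_comp, Category.assoc, smul_sub]
        rw [hD]
        simp only [Category.assoc, Iso.hom_inv_id_assoc]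
        abel

/-- Slide of a crossing over a cup. -/
lemma cup_slide :
    (λ_ D.X).inv ≫ (D.cup ▷ D.X) ≫ (α_ D.X D.X D.X).hom ≫ (D.X ◁ D.pos) =
      (ρ_ D.X).inv ≫ (D.X ◁ D.cup) ≫ (α_ D.X D.X D.X).inv ≫ (D.neg ▷ D.X) ≫
        (α_ D.X D.X D.X).hom := by
  rw [← cancel_mono (α_ D.X D.X D.X).inv]
  apply (@tensorRightHomEquiv C _ _ D.X D.X D.X (D.X ⊗ D.X) D.ep).symm.injective
  dsimp [tensorRightHomEquiv, ep]
  have hε : @ExactPairing.evaluation C _ _ D.X D.X D.ep = D.cap := rfl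
  rw [hε]
  trans D.neg
  · calc (((λ_ D.X).inv ≫ D.cup ▷ D.X ≫ (α_ D.X D.X D.X).hom ≫ D.X ◁ D.pos) ≫
          (α_ D.X D.X D.X).inv) ▷ D.X ≫ (α_ (D.X ⊗ D.X) D.X D.X).hom ≫
          (D.X ⊗ D.X) ◁ D.cap ≫ (ρ_ (D.X ⊗ D.X)).hom
        = 𝟙 _ ⊗≫ D.cup ▷ (D.X ⊗ D.X) ⊗≫
            D.X ◁ ((D.pos ▷ D.X) ≫ (α_ D.X D.X D.X).hom ≫ (D.X ◁ D.cap) ≫ (ρ_ D.X).hom) ⊗≫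
            𝟙 _ := by
          monoidal
      _ = 𝟙 _ ⊗≫ D.cup ▷ (D.X ⊗ D.X) ⊗≫
            D.X ◁ ((α_ D.X D.X D.X).hom ≫ (D.X ◁ D.neg) ≫ (α_ D.X D.X D.X).inv ≫
              (D.cap ▷ D.X) ≫ (λ_ D.X).hom) ⊗≫ 𝟙 _ := by
          rw [D.pos_slide]
      _ = 𝟙 _ ⊗≫ (D.cup ▷ (D.X ⊗ D.X) ≫ (D.X ⊗ D.X) ◁ D.neg) ⊗≫
            (D.X ◁ D.cap) ▷ D.X ⊗≫ 𝟙 _ := by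
          monoidal
      _ = 𝟙 _ ⊗≫ (𝟙_ C ◁ D.neg ≫ D.cup ▷ (D.X ⊗ D.X)) ⊗≫
            (D.X ◁ D.cap) ▷ D.X ⊗≫ 𝟙 _ := by
          rw [← whisker_exchange]
      _ = D.neg ≫ (𝟙 _ ⊗≫ (D.cup ▷ D.X ≫ (α_ D.X D.X D.X).hom ≫ D.X ◁ D.cap) ▷ D.X ⊗≫
            𝟙 _) := by
          monoidal
      _ = D.neg := by
          rw [D.snake_comp]; monoidal
  · symm
    calc (((ρ_ D.X).inv ≫ D.X ◁ D.cup ≫ (α_ D.X D.X D.X).inv ≫ D.neg ▷ D.X ≫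
          (α_ D.X D.X D.X).hom) ≫ (α_ D.X D.X D.X).inv) ▷ D.X ≫
          (α_ (D.X ⊗ D.X) D.X D.X).hom ≫ (D.X ⊗ D.X) ◁ D.cap ≫ (ρ_ (D.X ⊗ D.X)).hom
        = 𝟙 _ ⊗≫ (D.X ◁ D.cup) ▷ D.X ⊗≫
            (D.neg ▷ (D.X ⊗ D.X) ≫ (D.X ⊗ D.X) ◁ D.cap) ⊗≫ 𝟙 _ := by
          monoidal
      _ = 𝟙 _ ⊗≫ (D.X ◁ D.cup) ▷ D.X ⊗≫
            ((D.X ⊗ D.X) ◁ D.cap ≫ D.neg ▷ 𝟙_ C) ⊗≫ 𝟙 _ := by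
          rw [whisker_exchange]
      _ = 𝟙 _ ⊗≫ D.X ◁ (D.cup ▷ D.X ≫ (α_ D.X D.X D.X).hom ≫ D.X ◁ D.cap) ⊗≫ D.neg ⊗≫
            𝟙 _ := by
          monoidal
      _ = D.neg := by
          rw [D.snake_comp]; monoidal

/-- The left closure of the positive crossing is `t` times the identity. -/
lemma ltr_pos :
    (λ_ D.X).inv ≫ (D.cup ▷ D.X) ≫ (α_ D.X D.X D.X).hom ≫ (D.X ◁ D.pos) ≫
      (α_ D.X D.X D.X).inv ≫ (D.cap ▷ D.X) ≫ (λ_ D.X).hom = t • 𝟙 D.X := by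
  have h := congrArg
    (fun f => f ≫ ((α_ D.X D.X D.X).inv ≫ (D.cap ▷ D.X) ≫ (λ_ D.X).hom)) D.cup_slide
  simp only [Category.assoc, Iso.hom_inv_id_assoc] at h
  rw [h]
  calc (ρ_ D.X).inv ≫ D.X ◁ D.cup ≫ (α_ D.X D.X D.X).inv ≫ D.neg ▷ D.X ≫ D.cap ▷ D.X ≫
        (λ_ D.X).hom
      = (ρ_ D.X).inv ≫ D.X ◁ D.cup ≫ (α_ D.X D.X D.X).inv ≫ (D.neg ≫ D.cap) ▷ D.X ≫
        (λ_ D.X).hom := by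
        simp only [MonoidalCategory.comp_whiskerRight, Category.assoc]
    _ = t • ((ρ_ D.X).inv ≫ D.X ◁ D.cup ≫ (α_ D.X D.X D.X).inv ≫ D.cap ▷ D.X ≫
        (λ_ D.X).hom) := by
        rw [D.neg_cap, MonoidalLinear.smul_whiskerRight]
        simp only [Linear.smul_comp, Linear.comp_smul]
    _ = t • 𝟙 D.X := by rw [D.zig]

/-- Relation (ii): the negative crossing composed with the cup. -/
lemma cup_neg : D.cup ≫ D.neg = t • D.cup := by
  apply (@tensorRightHomEquiv C _ _ (𝟙_ C) D.X D.X D.X D.ep).symm.injective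
  dsimp [tensorRightHomEquiv]
  have hε : @ExactPairing.evaluation C _ _ D.X D.X D.ep = D.cap := rfl
  rw [hε]
  rw [MonoidalCategory.comp_whiskerRight, MonoidalLinear.smul_whiskerRight]
  simp only [Category.assoc, Linear.smul_comp]
  rw [D.zag']
  rw [D.cap_slide]
  have h2 := D.ltr_pos
  rw [Iso.inv_comp_eq] at h2
  rw [h2]
  simp only [Linear.comp_smul, Category.comp_id]

/-- Relation (iii): the positive crossing composed with the cup. -/
lemma cup_pos : D.cup ≫ D.pos = ⅟t • D.cup := by
  have h := congrArg (fun f => D.cup ≫ f) D.skein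
  simp only [Preadditive.comp_sub, Linear.comp_smul, Category.comp_id, D.cup_neg] at h
  rw [← Category.assoc, D.bubble, Linear.smul_comp, Category.id_comp] at h
  have hsc : z • (D.cup - (⅟z * (t - ⅟t) + 1) • D.cup) = (z - (t - ⅟t + z)) • D.cup := by
    rw [smul_sub, smul_smul, ← sub_smul]
    congr 1
    linear_combination (⅟t - t) * (mul_invOf_self z)
  rw [hsc] at h
  have h2 := sub_eq_iff_eq_add.mp h
  rw [h2, ← add_smul]
  congr 1
  ring

lemma dotInv_cap : (D.dotInv ▷ D.X) ≫ D.cap = (D.X ◁ D.dot) ≫ D.cap := by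
  calc (D.dotInv ▷ D.X) ≫ D.cap
      = (D.dotInv ▷ D.X) ≫ (D.X ◁ (D.dot ≫ D.dotInv)) ≫ D.cap := by
        rw [D.dot_dotInv]; simp
    _ = (D.dotInv ▷ D.X) ≫ (D.X ◁ D.dot) ≫ (D.X ◁ D.dotInv) ≫ D.cap := by
        rw [MonoidalCategory.whiskerLeft_comp]; simp only [Category.assoc]
    _ = (D.dotInv ▷ D.X) ≫ (D.X ◁ D.dot) ≫ (D.dot ▷ D.X) ≫ D.cap := by
        rw [← D.dot_cap]
    _ = (D.X ◁ D.dot) ≫ (D.dotInv ▷ D.X) ≫ (D.dot ▷ D.X) ≫ D.cap := by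
        rw [← Category.assoc, ← whisker_exchange, Category.assoc]
    _ = (D.X ◁ D.dot) ≫ ((D.dotInv ≫ D.dot) ▷ D.X) ≫ D.cap := by
        rw [MonoidalCategory.comp_whiskerRight]; simp only [Category.assoc]
    _ = (D.X ◁ D.dot) ≫ D.cap := by rw [D.dotInv_dot]; simp

/-- Relation (iv): dots slide around the cup. -/
lemma cup_dot : D.cup ≫ (D.dot ▷ D.X) = D.cup ≫ (D.X ◁ D.dotInv) := by
  apply (@tensorRightHomEquiv C _ _ (𝟙_ C) D.X D.X D.X D.ep).symm.injective
  dsimp [tensorRightHomEquiv]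
  have hε : @ExactPairing.evaluation C _ _ D.X D.X D.ep = D.cap := rfl
  rw [hε]
  trans (λ_ D.X).hom ≫ D.dot
  · calc (D.cup ≫ D.dot ▷ D.X) ▷ D.X ≫ (α_ D.X D.X D.X).hom ≫ D.X ◁ D.cap ≫ (ρ_ D.X).hom
        = 𝟙 _ ⊗≫ D.cup ▷ D.X ⊗≫ (D.dot ▷ (D.X ⊗ D.X) ≫ D.X ◁ D.cap) ⊗≫ 𝟙 _ := by
          monoidal
      _ = 𝟙 _ ⊗≫ D.cup ▷ D.X ⊗≫ (D.X ◁ D.cap ≫ D.dot ▷ 𝟙_ C) ⊗≫ 𝟙 _ := by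
          rw [whisker_exchange]
      _ = 𝟙 _ ⊗≫ (D.cup ▷ D.X ≫ (α_ D.X D.X D.X).hom ≫ D.X ◁ D.cap) ⊗≫ D.dot ⊗≫ 𝟙 _ := by
          monoidal
      _ = (λ_ D.X).hom ≫ D.dot := by rw [D.snake_comp]; monoidal
  · symm
    calc (D.cup ≫ D.X ◁ D.dotInv) ▷ D.X ≫ (α_ D.X D.X D.X).hom ≫ D.X ◁ D.cap ≫ (ρ_ D.X).hom
        = 𝟙 _ ⊗≫ D.cup ▷ D.X ⊗≫ D.X ◁ ((D.dotInv ▷ D.X) ≫ D.cap) ⊗≫ 𝟙 _ := by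
          monoidal
      _ = 𝟙 _ ⊗≫ D.cup ▷ D.X ⊗≫ D.X ◁ ((D.X ◁ D.dot) ≫ D.cap) ⊗≫ 𝟙 _ := by
          rw [D.dotInv_cap]
      _ = 𝟙 _ ⊗≫ (D.cup ▷ D.X ≫ (D.X ⊗ D.X) ◁ D.dot) ⊗≫ D.X ◁ D.cap ⊗≫ 𝟙 _ := by
          monoidal
      _ = 𝟙 _ ⊗≫ (𝟙_ C ◁ D.dot ≫ D.cup ▷ D.X) ⊗≫ D.X ◁ D.cap ⊗≫ 𝟙 _ := by
          rw [← whisker_exchange]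
      _ = 𝟙_ C ◁ D.dot ≫ (𝟙 _ ⊗≫ (D.cup ▷ D.X ≫ (α_ D.X D.X D.X).hom ≫ D.X ◁ D.cap) ⊗≫ 𝟙 _) := by
          monoidal
      _ = (λ_ D.X).hom ≫ D.dot := by
          rw [D.snake_comp]
          monoidal

end KauffmanDatum

/-- Relations: `e ∘ σ = t⁻¹ e`; `σ̄ ∘ c = t c`; `σ ∘ c = t⁻¹ c`;
`(δ ⊗ id) ∘ c = (id ⊗ δ̄) ∘ c`. -/
theorem stmt_14 {k : Type*} [CommRing k] {z t : k} [Invertible z] [Invertible t]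
    {C : Type u} [Category.{v} C] [MonoidalCategory C]
    [Preadditive C] [Linear k C] [MonoidalPreadditive C] [MonoidalLinear k C]
    (D : KauffmanDatum k z t C) :
    (D.pos ≫ D.cap = ⅟t • D.cap) ∧
    (D.cup ≫ D.neg = t • D.cup) ∧
    (D.cup ≫ D.pos = ⅟t • D.cup) ∧
    (D.cup ≫ (D.dot ▷ D.X) = D.cup ≫ (D.X ◁ D.dotInv)) := by
  exact ⟨D.pos_cap, D.cup_neg, D.cup_pos, D.cup_dot⟩
end
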